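/- Let n ≥ 5 be an odd integer with gcd(n, F_n) = 1, where F_n is the n-th Fibonacci number. Then the critical group of the circulant graph C_n^{1,2} satisfies K(C_n^{1,2}) ≅ (ℤ/F_nℤ) × (ℤ/F_nℤ) × (ℤ/nℤ). -/

import Mathlib

open scoped BigOperators

/-- The column of the Laplacian of the circulant graph C_n^{1,2} at vertex `v`:
value −4 at `v`, value 1 at each of its neighbors `v ± 1, v ± 2`, and 0 elsewhere. -/
def circLap (n : ℕ) [NeZero n] (v u : ZMod n) : ℤ :=
  if u = v then -4
  else if u - v = 1 ∨ u - v = -1 ∨ u - v = 2 ∨ u - v = -2 then 1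
  else 0

/-- The group of degree-zero divisors on C_n^{1,2}. -/
def circD (n : ℕ) [NeZero n] : AddSubgroup (ZMod n → ℤ) where
  carrier := {δ | ∑ v, δ v = 0}
  zero_mem' := by simp
  add_mem' := by
    intro a b ha hb
    simp only [Set.mem_setOf_eq, Pi.add_apply, Finset.sum_add_distrib] at *
    simp [ha, hb]
  neg_mem' := by
    intro a ha
    simp only [Set.mem_setOf_eq, Pi.neg_apply, Finset.sum_neg_distrib] at *
    simp [ha]

/-- The critical group (Jacobian) of the circulant graph C_n^{1,2}: degree-zero divisors
modulo the subgroup generated by the columns of the Laplacian. -/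
abbrev circK (n : ℕ) [NeZero n] :=
  circD n ⧸ ((AddSubgroup.closure (Set.range (circLap n))).addSubgroupOf (circD n))

/-!
Identify divisors on `C_n^{1,2}` with the group ring `ℤ[ℤ/n] = ℤ[X]/(X^n - 1)`. The Laplacian
columns generate the ideal of `γ = X⁻² + X⁻¹ - 4 + X + X²`, where `X²γ ≡ (X - 1)² r` with
`r = X² + 3X + 1`, and the degree-zero divisors are the multiples of `X - 1`. Cancelling `X - 1`
gives `K ≅ ℤ[X]/J` with `J = ((X - 1) r, 1 + X + ⋯ + X^(n-1))`.

Modulo `r` the geometric sum equals `F_n (X + 1)^(n-1)`, and `X + 1` is a unit there since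
`(X + 1)(X + 2) = 1 + r`; modulo `X - 1` it equals `n`. Hence `J = (r, F_n) ∩ (X - 1, n)`. When
`gcd(n, F_n) = 1` the two ideals are comaximal, and the Chinese remainder theorem gives
`ℤ[X]/J ≅ (ℤ/F_n)[X]/(r) × ℤ/n ≅ (ℤ/F_n)² × ℤ/n`.
-/

open Polynomial

theorem Ideal.span_pair_le_iff {R : Type*} [Semiring R] {a b : R} {I : Ideal R} :
    Ideal.span {a, b} ≤ I ↔ a ∈ I ∧ b ∈ I := by
  simp [Ideal.span_le, Set.insert_subset_iff]

theorem Ideal.span_pair_eq_of_mk_eq_mul_unit {R : Type*} [CommRing R] {r a b u : R}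
    (hu : IsUnit (Ideal.Quotient.mk (Ideal.span {r}) u))
    (h : Ideal.Quotient.mk (Ideal.span {r}) a = Ideal.Quotient.mk _ b * Ideal.Quotient.mk _ u) :
    Ideal.span {r, a} = Ideal.span {r, b} := by
  have hcomap : ∀ c : R, Ideal.span {r, c} =
      (Ideal.span {Ideal.Quotient.mk (Ideal.span {r}) c}).comap (Ideal.Quotient.mk _) := by
    intro c
    have hle : Ideal.span {r} ≤ Ideal.span {r, c} := Ideal.span_mono (by simp)
    rw [← Ideal.comap_map_mk hle, Ideal.map_span, Set.image_pair,
      Ideal.Quotient.mk_singleton_self, Ideal.span_insert_zero]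
  rw [hcomap, hcomap, h, Ideal.span_singleton_mul_right_unit hu]

theorem RingHom.prod_surjective_of_sup_ker_eq_top {R S T : Type*} [CommRing R] [Ring S] [Ring T]
    {f : R →+* S} {g : R →+* T} (hf : Function.Surjective f) (hg : Function.Surjective g)
    (h : RingHom.ker f ⊔ RingHom.ker g = ⊤) : Function.Surjective (f.prod g) := by
  rintro ⟨s, t⟩
  obtain ⟨a, rfl⟩ := hf s
  obtain ⟨b, rfl⟩ := hg t
  obtain ⟨i, hi, j, hj, hij⟩ := Submodule.mem_sup.1 (h ▸ Submodule.mem_top : (1 : R) ∈ _)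
  rw [RingHom.mem_ker] at hi hj
  have hfj : f j = 1 := by rw [← map_one f, ← hij, map_add, hi, zero_add]
  have hgi : g i = 1 := by rw [← map_one g, ← hij, map_add, hj, add_zero]
  exact ⟨j * a + i * b, by simp [hi, hj, hfj, hgi]⟩

theorem nonempty_addEquiv_of_ker_eq {A B C : Type*} [AddGroup A] [AddGroup B] [AddGroup C]
    {f : A →+ B} {g : A →+ C} (hf : Function.Surjective f) (hg : Function.Surjective g)
    (h : f.ker = g.ker) : Nonempty (B ≃+ C) :=
  ⟨(QuotientAddGroup.quotientKerEquivOfSurjective f hf).symm.trans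
    ((QuotientAddGroup.quotientAddEquivOfEq h).trans
      (QuotientAddGroup.quotientKerEquivOfSurjective g hg))⟩

theorem nonempty_addEquiv_quotient_span_monic {R : Type*} [CommRing R] {g : R[X]}
    (hg : g.Monic) : Nonempty (R[X] ⧸ Ideal.span {g} ≃+ (Fin g.natDegree → R)) :=
  ⟨(AdjoinRoot.powerBasis' hg).basis.equivFun.toAddEquiv⟩

theorem ZMod.natCast_eq_natCast_iff_of_lt {n a b : ℕ} (ha : a < n) (hb : b < n) :
    (a : ZMod n) = b ↔ a = b := by
  rw [ZMod.natCast_eq_natCast_iff', Nat.mod_eq_of_lt ha, Nat.mod_eq_of_lt hb]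

namespace CirculantJacobian

section Fibonacci

variable {R : Type*} [CommRing R] {x : R}

theorem pow_succ_eq_fib_mul (hx : x ^ 2 + 3 * x + 1 = 0) (k : ℕ) :
    x ^ (k + 1) = Nat.fib (k + 2) * (x + 1) ^ (k + 1) - Nat.fib (k + 1) * (x + 1) ^ k := by
  induction k with
  | zero => simp
  | succ k ih =>
    rw [pow_succ, ih, Nat.fib_add_two (n := k + 1)]
    push_cast
    linear_combination (-(Nat.fib (k + 1) : R) * (x + 1) ^ k) * hx

theorem geom_sum_eq_fib_mul (hx : x ^ 2 + 3 * x + 1 = 0) (k : ℕ) :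
    ∑ i ∈ Finset.range (k + 1), x ^ i = Nat.fib (k + 1) * (x + 1) ^ k := by
  induction k with
  | zero => simp
  | succ k ih =>
    rw [Finset.sum_range_succ, ih, pow_succ_eq_fib_mul hx, Nat.fib_add_two]
    push_cast
    ring

theorem isUnit_add_one (hx : x ^ 2 + 3 * x + 1 = 0) : IsUnit (x + 1) :=
  IsUnit.of_mul_eq_one (x + 2) (by linear_combination hx)

end Fibonacci

noncomputable def quad : ℤ[X] := X ^ 2 + 3 * X + 1

theorem quad_monic : quad.Monic := by
  unfold quad
  monicity!

theorem natDegree_quad : quad.natDegree = 2 := by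
  unfold quad
  compute_degree!

noncomputable def geomSum (n : ℕ) : ℤ[X] := ∑ i ∈ Finset.range n, X ^ i

noncomputable def jacobianIdeal (n : ℕ) : Ideal ℤ[X] := Ideal.span {(X - 1) * quad, geomSum n}

theorem span_quad_geomSum {n : ℕ} (hn : n ≠ 0) :
    Ideal.span {quad, geomSum n} = Ideal.span {quad, C (Nat.fib n : ℤ)} := by
  set mk := Ideal.Quotient.mk (Ideal.span {quad})
  have hroot : mk X ^ 2 + 3 * mk X + 1 = 0 :=
    calc mk X ^ 2 + 3 * mk X + 1 = mk (X ^ 2 + 3 * X + 1) := by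
          rw [map_add, map_add, map_mul, map_pow, map_one, map_ofNat]
      _ = 0 := Ideal.Quotient.mk_singleton_self quad
  obtain ⟨k, rfl⟩ := Nat.exists_eq_succ_of_ne_zero hn
  refine Ideal.span_pair_eq_of_mk_eq_mul_unit (u := (X + 1) ^ k)
    (by simpa using (isUnit_add_one hroot).pow k) ?_
  simpa [geomSum] using geom_sum_eq_fib_mul hroot k

theorem span_X_sub_one_geomSum (n : ℕ) :
    Ideal.span {X - 1, geomSum n} = Ideal.span {X - 1, C (n : ℤ)} := by
  have hX : Ideal.Quotient.mk (Ideal.span {(X - 1 : ℤ[X])}) X = 1 := by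
    rw [← map_one (Ideal.Quotient.mk _), Ideal.Quotient.eq]
    exact Ideal.mem_span_singleton_self _
  refine Ideal.span_pair_eq_of_mk_eq_mul_unit (u := 1) (by simp) ?_
  simp [geomSum, hX]

theorem span_sup_span_eq_top {n : ℕ} (hgcd : Nat.gcd n (Nat.fib n) = 1) :
    Ideal.span {quad, C (Nat.fib n : ℤ)} ⊔ Ideal.span {X - 1, C (n : ℤ)} = ⊤ := by
  obtain ⟨a, b, hab⟩ :=
    (Nat.isCoprime_iff_coprime.2 (Nat.coprime_comm.1 hgcd)).map (C : ℤ →+* ℤ[X])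
  rw [Ideal.eq_top_iff_one, ← hab]
  exact Ideal.add_mem _
    (Ideal.mem_sup_left (Ideal.mul_mem_left _ _ (Ideal.subset_span (by simp))))
    (Ideal.mem_sup_right (Ideal.mul_mem_left _ _ (Ideal.subset_span (by simp))))

theorem jacobianIdeal_eq_inf {n : ℕ} (hn : n ≠ 0) (hgcd : Nat.gcd n (Nat.fib n) = 1) :
    jacobianIdeal n =
      Ideal.span {quad, C (Nat.fib n : ℤ)} ⊓ Ideal.span {X - 1, C (n : ℤ)} := by
  have hcop := span_sup_span_eq_top hgcd
  rw [← span_quad_geomSum hn, ← span_X_sub_one_geomSum] at hcop ⊢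
  refine le_antisymm (le_inf ?_ ?_) ?_
  · exact Ideal.span_pair_le_iff.2
      ⟨Ideal.mem_span_pair.2 ⟨X - 1, 0, by ring⟩, Ideal.subset_span (by simp)⟩
  · exact Ideal.span_pair_le_iff.2
      ⟨Ideal.mem_span_pair.2 ⟨quad, 0, by ring⟩, Ideal.subset_span (by simp)⟩
  rw [← Ideal.mul_eq_inf_of_coprime hcop]
  refine Ideal.mul_le.2 fun a ha b hb => ?_
  obtain ⟨c, d, rfl⟩ := Ideal.mem_span_pair.1 ha
  obtain ⟨e, f, rfl⟩ := Ideal.mem_span_pair.1 hb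
  exact Ideal.mem_span_pair.2
    ⟨c * e, c * quad * f + d * e * (X - 1) + d * f * geomSum n, by ring⟩

noncomputable def reduceMod (m : ℕ) (p : ℤ[X]) :
    ℤ[X] →+* (ZMod m)[X] ⧸ Ideal.span {p.map (Int.castRingHom (ZMod m))} :=
  (Ideal.Quotient.mk _).comp (mapRingHom (Int.castRingHom (ZMod m)))

theorem reduceMod_surjective (m : ℕ) (p : ℤ[X]) : Function.Surjective (reduceMod m p) :=
  Ideal.Quotient.mk_surjective.comp (map_surjective _ ZMod.intCast_surjective)

theorem ker_reduceMod (m : ℕ) (p : ℤ[X]) :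
    RingHom.ker (reduceMod m p) = Ideal.span {p, C (m : ℤ)} := by
  have hmap : Ideal.span {p.map (Int.castRingHom (ZMod m))} =
      (Ideal.span {p}).map (mapRingHom (Int.castRingHom (ZMod m))) := by
    rw [Ideal.map_span, Set.image_singleton, coe_mapRingHom]
  rw [reduceMod, ← RingHom.comap_ker, Ideal.mk_ker, hmap,
    Ideal.comap_map_of_surjective _ (map_surjective _ ZMod.intCast_surjective),
    ← RingHom.ker_eq_comap_bot, ker_mapRingHom, ZMod.ker_intCastRingHom, Ideal.map_span,
    Set.image_singleton, Ideal.span_insert]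

section GroupRing

noncomputable def toGroupRing (n : ℕ) : ℤ[X] →ₐ[ℤ] AddMonoidAlgebra ℤ (ZMod n) :=
  aeval (AddMonoidAlgebra.single 1 1)

theorem toGroupRing_monomial {n : ℕ} (k : ℕ) (a : ℤ) :
    toGroupRing n (monomial k a) = AddMonoidAlgebra.single (k : ZMod n) a := by
  rw [← C_mul_X_pow_eq_monomial, map_mul, map_pow, toGroupRing, aeval_C, aeval_X,
    AddMonoidAlgebra.coe_algebraMap, Function.comp_apply, AddMonoidAlgebra.single_pow,
    AddMonoidAlgebra.single_mul_single]
  simp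

theorem toGroupRing_X {n : ℕ} : toGroupRing n X = AddMonoidAlgebra.single 1 1 :=
  aeval_X _

theorem toGroupRing_X_pow {n : ℕ} (k : ℕ) :
    toGroupRing n (X ^ k) = AddMonoidAlgebra.single (k : ZMod n) 1 := by
  rw [← monomial_one_right_eq_X_pow, toGroupRing_monomial]

theorem toGroupRing_C {n : ℕ} (a : ℤ) : toGroupRing n (C a) = AddMonoidAlgebra.single 0 a := by
  rw [← monomial_zero_left, toGroupRing_monomial, Nat.cast_zero]

noncomputable def coeffFun (n : ℕ) [NeZero n] :
    AddMonoidAlgebra ℤ (ZMod n) ≃+ (ZMod n → ℤ) :=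
  AddMonoidAlgebra.coeffAddEquiv.trans Finsupp.addEquivFunOnFinite

noncomputable def divisorOf (n : ℕ) [NeZero n] : ℤ[X] →+ (ZMod n → ℤ) :=
  (coeffFun n).toAddMonoidHom.comp (toGroupRing n).toAddMonoidHom

noncomputable def divisorPoly (n : ℕ) [NeZero n] (δ : ZMod n → ℤ) : ℤ[X] :=
  ∑ v, monomial v.val (δ v)

variable {n : ℕ} [NeZero n]

theorem coeffFun_apply (w : AddMonoidAlgebra ℤ (ZMod n)) (v : ZMod n) :
    coeffFun n w v = w.coeff v :=
  rfl

theorem divisorOf_apply (f : ℤ[X]) : divisorOf n f = coeffFun n (toGroupRing n f) :=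
  rfl

theorem divisorOf_monomial (k : ℕ) (a : ℤ) :
    divisorOf n (monomial k a) = Pi.single (k : ZMod n) a := by
  ext v
  simp [divisorOf_apply, coeffFun_apply, toGroupRing_monomial, Finsupp.single_apply,
    Pi.single_apply, eq_comm]

theorem divisorPoly_add (δ ε : ZMod n → ℤ) :
    divisorPoly n (δ + ε) = divisorPoly n δ + divisorPoly n ε := by
  simp [divisorPoly, Finset.sum_add_distrib]

theorem divisorPoly_single (w : ZMod n) (a : ℤ) :
    divisorPoly n (Pi.single w a) = monomial w.val a := by
  simp [divisorPoly, Pi.single_apply, apply_ite]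

theorem divisorOf_divisorPoly (δ : ZMod n → ℤ) : divisorOf n (divisorPoly n δ) = δ := by
  simp [divisorPoly, map_sum, divisorOf_monomial, Finset.univ_sum_single]

theorem eval_one_divisorPoly (δ : ZMod n → ℤ) : (divisorPoly n δ).eval 1 = ∑ v, δ v := by
  simp [divisorPoly, eval_finsetSum]

theorem sub_divisorPoly_divisorOf_mem (f : ℤ[X]) :
    f - divisorPoly n (divisorOf n f) ∈ Ideal.span {X ^ n - 1} := by
  induction f using Polynomial.induction_on' with
  | add p q hp hq =>
    rw [map_add, divisorPoly_add]
    convert add_mem hp hq using 1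
    ring
  | monomial k a =>
    rw [divisorOf_monomial, divisorPoly_single, ZMod.val_natCast, Ideal.mem_span_singleton]
    obtain ⟨g, hg⟩ := pow_one_sub_dvd_pow_mul_sub_one (X : ℤ[X]) n (k / n)
    have hk : monomial k a = monomial (k % n) a * X ^ (n * (k / n)) := by
      rw [← C_mul_X_pow_eq_monomial, ← C_mul_X_pow_eq_monomial, mul_assoc, ← pow_add,
        Nat.mod_add_div]
    exact ⟨monomial (k % n) a * g, by rw [hk]; linear_combination monomial (k % n) a * hg⟩

theorem toGroupRing_surjective : Function.Surjective (toGroupRing n) := fun w =>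
  ⟨divisorPoly n (coeffFun n w), (coeffFun n).injective (divisorOf_divisorPoly _)⟩

theorem ker_toGroupRing : RingHom.ker (toGroupRing n) = Ideal.span {X ^ n - 1} := by
  ext f
  rw [RingHom.mem_ker]
  constructor
  · intro hf
    have hdiv : divisorOf n f = 0 := by rw [divisorOf_apply, hf, map_zero]
    simpa [hdiv, divisorPoly] using sub_divisorPoly_divisorOf_mem (n := n) f
  · intro hf
    obtain ⟨g, rfl⟩ := Ideal.mem_span_singleton'.1 hf
    rw [map_mul, map_sub, toGroupRing_X_pow, map_one, ZMod.natCast_self,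
      ← AddMonoidAlgebra.one_def, sub_self, mul_zero]

theorem sum_divisorOf (f : ℤ[X]) : ∑ v, divisorOf n f v = f.eval 1 := by
  obtain ⟨g, hg⟩ := Ideal.mem_span_singleton'.1 (sub_divisorPoly_divisorOf_mem (n := n) f)
  have heval := congrArg (eval 1) hg
  simp only [eval_mul, eval_sub, eval_pow, eval_X, eval_one, one_pow, sub_self, mul_zero,
    eval_one_divisorPoly] at heval
  linarith

end GroupRing

-- `X ^ (n - 1)` and `X ^ (n - 2)` stand for `X⁻¹` and `X⁻²` in `ℤ[X]/(X ^ n - 1)`.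
noncomputable def laplacianPoly (n : ℕ) : ℤ[X] := X ^ 2 + X - C 4 + X ^ (n - 1) + X ^ (n - 2)

theorem X_sq_mul_laplacianPoly {n : ℕ} (hn : 2 ≤ n) :
    X ^ 2 * laplacianPoly n = (X - 1) ^ 2 * quad + (X ^ n - 1) * (X + 1) := by
  obtain ⟨m, rfl⟩ := Nat.exists_eq_add_of_le' hn
  rw [laplacianPoly, quad, show m + 2 - 1 = m + 1 by omega, Nat.add_sub_cancel, C_ofNat]
  ring

theorem span_laplacianPoly {n : ℕ} (hn : 2 ≤ n) :
    Ideal.span {X ^ n - 1, laplacianPoly n} = Ideal.span {X - 1} * jacobianIdeal n := by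
  have hgeom : (X - 1) * geomSum n = X ^ n - 1 := by rw [geomSum, mul_comm, geom_sum_mul]
  have hsq := X_sq_mul_laplacianPoly hn
  have hpow : X ^ (n - 2) * X ^ 2 = (X : ℤ[X]) ^ n := by rw [← pow_add, Nat.sub_add_cancel hn]
  rw [jacobianIdeal, Ideal.span_mul_span', Set.singleton_mul, Set.image_pair, hgeom,
    Set.pair_comm ((X - 1) * ((X - 1) * quad)), ← mul_assoc, ← sq]
  refine le_antisymm (Ideal.span_pair_le_iff.2 ⟨Ideal.subset_span (by simp), ?_⟩)
    (Ideal.span_pair_le_iff.2 ⟨Ideal.subset_span (by simp), ?_⟩)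
  · exact Ideal.mem_span_pair.2 ⟨X ^ (n - 2) * (X + 1) - laplacianPoly n, X ^ (n - 2),
      by linear_combination (-X ^ (n - 2)) * hsq + laplacianPoly n * hpow⟩
  · exact Ideal.mem_span_pair.2 ⟨-(X + 1), X ^ 2, by linear_combination hsq⟩

theorem mul_X_sub_one_mem_iff {n : ℕ} (hn : 2 ≤ n) (f : ℤ[X]) :
    (X - 1) * f ∈ Ideal.span {X ^ n - 1, laplacianPoly n} ↔ f ∈ jacobianIdeal n := by
  rw [span_laplacianPoly hn, Ideal.mem_span_singleton_mul]
  refine ⟨fun ⟨g, hg, hgf⟩ => ?_, fun hf => ⟨f, hf, rfl⟩⟩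
  have hne : (X - 1 : ℤ[X]) ≠ 0 := by simpa using X_sub_C_ne_zero (1 : ℤ)
  exact mul_left_cancel₀ hne hgf ▸ hg

section Laplacian

variable {n : ℕ} [NeZero n]

theorem coeff_toGroupRing_laplacianPoly (hn : 5 ≤ n) (d : ZMod n) :
    (toGroupRing n (laplacianPoly n)).coeff d = circLap n 0 d := by
  obtain ⟨j, hj, rfl⟩ : ∃ j < n, (j : ZMod n) = d :=
    ⟨d.val, d.val_lt, ZMod.natCast_zmod_val d⟩
  -- Since `5 ≤ n`, the offsets `0, 1, 2, n - 1, n - 2` are distinct representatives in `[0, n)`.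
  have key : ∀ k < n, ((j : ZMod n) = k ↔ j = k) := fun k hk =>
    ZMod.natCast_eq_natCast_iff_of_lt hj hk
  have e0 : (j : ZMod n) = 0 ↔ j = 0 := by simpa using key 0 (by omega)
  have e1 : (j : ZMod n) = 1 ↔ j = 1 := by simpa using key 1 (by omega)
  have e2 : (j : ZMod n) = 2 ↔ j = 2 := by simpa using key 2 (by omega)
  have em1 : (j : ZMod n) = -1 ↔ j = n - 1 := by
    rw [← key (n - 1) (by omega), Nat.cast_sub (by omega)]
    simp
  have em2 : (j : ZMod n) = -2 ↔ j = n - 2 := by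
    rw [← key (n - 2) (by omega), Nat.cast_sub (by omega)]
    simp
  simp only [laplacianPoly, map_add, map_sub, toGroupRing_X_pow, toGroupRing_C, toGroupRing_X,
    AddMonoidAlgebra.coeff_add, AddMonoidAlgebra.coeff_sub, AddMonoidAlgebra.coeff_single,
    Finsupp.add_apply, Finsupp.sub_apply, Finsupp.single_eq_pi_single, Pi.single_apply,
    key 2 (by omega), key (n - 1) (by omega), key (n - 2) (by omega),
    circLap, sub_zero, e0, e1, e2, em1, em2]
  split_ifs <;> omega

theorem circLap_eq_circLap_zero (v u : ZMod n) : circLap n v u = circLap n 0 (u - v) := by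
  simp [circLap, sub_eq_zero]

theorem coeffFun_single_mul_laplacianPoly (hn : 5 ≤ n) (v : ZMod n) :
    coeffFun n (AddMonoidAlgebra.single v 1 * toGroupRing n (laplacianPoly n)) = circLap n v := by
  ext u
  rw [coeffFun_apply, AddMonoidAlgebra.coeff_single_mul_apply, one_mul,
    coeff_toGroupRing_laplacianPoly hn, circLap_eq_circLap_zero v u, neg_add_eq_sub]

theorem closure_range_circLap (hn : 5 ≤ n) :
    AddSubgroup.closure (Set.range (circLap n)) =
      (Ideal.span {toGroupRing n (laplacianPoly n)}).toAddSubgroup.map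
        (coeffFun n).toAddMonoidHom := by
  refine le_antisymm ((AddSubgroup.closure_le _).2 ?_) ?_
  · rintro _ ⟨v, rfl⟩
    exact ⟨_, Ideal.mem_span_singleton'.2 ⟨_, rfl⟩, coeffFun_single_mul_laplacianPoly hn v⟩
  · rintro _ ⟨_, hw, rfl⟩
    obtain ⟨w, rfl⟩ := Ideal.mem_span_singleton'.1 hw
    clear hw
    induction w using AddMonoidAlgebra.induction_linear with
    | zero => simp
    | add f g hf hg =>
      rw [add_mul, map_add]
      exact add_mem hf hg
    | single v a =>
      have hsingle : AddMonoidAlgebra.single v a = a • AddMonoidAlgebra.single v (1 : ℤ) := by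
        rw [AddMonoidAlgebra.smul_single', mul_one]
      rw [hsingle, smul_mul_assoc, map_zsmul, AddEquiv.coe_toAddMonoidHom,
        coeffFun_single_mul_laplacianPoly hn v]
      exact zsmul_mem (AddSubgroup.subset_closure (Set.mem_range_self v)) a

theorem divisorOf_mem_closure_iff (hn : 5 ≤ n) (f : ℤ[X]) :
    divisorOf n f ∈ AddSubgroup.closure (Set.range (circLap n)) ↔
      f ∈ Ideal.span {X ^ n - 1, laplacianPoly n} := by
  have hmap : Ideal.span {toGroupRing n (laplacianPoly n)} =
      (Ideal.span {laplacianPoly n}).map (toGroupRing n) := by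
    rw [Ideal.map_span, Set.image_singleton]
  rw [closure_range_circLap hn, AddSubgroup.mem_map_equiv, divisorOf_apply,
    AddEquiv.symm_apply_apply, Submodule.mem_toAddSubgroup, hmap, ← Ideal.mem_comap,
    Ideal.comap_map_of_surjective (toGroupRing n) toGroupRing_surjective,
    ← RingHom.ker_eq_comap_bot, ker_toGroupRing, sup_comm, ← Ideal.span_insert]

variable (n) in
noncomputable def jacobianMap : ℤ[X] →+ circK n :=
  (QuotientAddGroup.mk' _).comp <|
    ((divisorOf n).comp (AddMonoidHom.mulLeft (X - 1))).codRestrict (circD n) fun f => by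
      change ∑ v, divisorOf n ((X - 1) * f) v = 0
      simp [sum_divisorOf]

theorem jacobianMap_surjective : Function.Surjective (jacobianMap n) := by
  intro y
  obtain ⟨⟨δ, hδ⟩, rfl⟩ := QuotientAddGroup.mk'_surjective _ y
  have hroot : (divisorPoly n δ).IsRoot 1 := by rw [IsRoot, eval_one_divisorPoly]; exact hδ
  obtain ⟨g, hg⟩ := dvd_iff_isRoot.2 hroot
  refine ⟨g, congrArg _ (Subtype.ext ?_)⟩
  change divisorOf n ((X - 1) * g) = δ
  rw [← C_1, ← hg, divisorOf_divisorPoly]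

theorem jacobianMap_eq_zero_iff (hn : 5 ≤ n) (f : ℤ[X]) :
    jacobianMap n f = 0 ↔ f ∈ jacobianIdeal n := by
  rw [jacobianMap, AddMonoidHom.comp_apply, QuotientAddGroup.mk'_apply,
    QuotientAddGroup.eq_zero_iff, AddSubgroup.mem_addSubgroupOf]
  exact (divisorOf_mem_closure_iff hn _).trans (mul_X_sub_one_mem_iff (by omega) f)

end Laplacian

end CirculantJacobian

open CirculantJacobian

theorem circulant_jacobian_general (n : ℕ) [NeZero n] (hn : 5 ≤ n)
    (hgcd : Nat.gcd n (Nat.fib n) = 1) :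
    Nonempty (circK n ≃+ (ZMod (Nat.fib n) × ZMod (Nat.fib n) × ZMod n)) := by
  have : Fact (1 < Nat.fib n) := ⟨(Nat.fib_mono hn).trans_lt' (by decide)⟩
  have : Fact (1 < n) := ⟨by omega⟩
  set ψ := (reduceMod (Nat.fib n) quad).prod (reduceMod n (X - 1))
  have hψ : Function.Surjective ψ :=
    RingHom.prod_surjective_of_sup_ker_eq_top (reduceMod_surjective _ _)
      (reduceMod_surjective _ _) (by rw [ker_reduceMod, ker_reduceMod, span_sup_span_eq_top hgcd])
  have hker : (jacobianMap n).ker = ψ.toAddMonoidHom.ker := by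
    ext f
    simp only [AddMonoidHom.mem_ker, jacobianMap_eq_zero_iff hn,
      jacobianIdeal_eq_inf (by omega) hgcd, ← ker_reduceMod, Ideal.mem_inf, RingHom.mem_ker]
    simp [ψ]
  obtain ⟨e⟩ := nonempty_addEquiv_of_ker_eq jacobianMap_surjective hψ hker
  have h₁ := nonempty_addEquiv_quotient_span_monic
    (quad_monic.map (Int.castRingHom (ZMod (Nat.fib n))))
  have h₂ := nonempty_addEquiv_quotient_span_monic
    ((monic_X_sub_C (1 : ℤ)).map (Int.castRingHom (ZMod n)))
  rw [quad_monic.natDegree_map, natDegree_quad] at h₁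
  rw [(monic_X_sub_C _).natDegree_map, natDegree_X_sub_C, C_1] at h₂
  obtain ⟨e₁⟩ := h₁
  obtain ⟨e₂⟩ := h₂
  let e₁' := e₁.trans (RingEquiv.piFinTwo fun _ => ZMod (Nat.fib n)).toAddEquiv
  let e₂' := e₂.trans (AddEquiv.funUnique (Fin 1) (ZMod n))
  exact ⟨e.trans ((e₁'.prodCongr e₂').trans AddEquiv.prodAssoc)⟩

/-- For odd n ≥ 5 with gcd(n, F_n) = 1, the critical group of C_n^{1,2}
is (ℤ/F_nℤ) × (ℤ/F_nℤ) × (ℤ/nℤ). -/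
theorem circulant_jacobian (n : ℕ) [NeZero n] (hn : 5 ≤ n) (hodd : Odd n)
    (hgcd : Nat.gcd n (Nat.fib n) = 1) :
    Nonempty (circK n ≃+ (ZMod (Nat.fib n) × ZMod (Nat.fib n) × ZMod n)) :=
  circulant_jacobian_general n hn hgcd
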